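/- For every a₀ > 0, every c > 0, every G̃ > 0, every integer M ≥ 2 and every integer r ≥ 2 there exist ε_r ∈ (0,1) and positive constants c₂, c₃, …, c_r such that the following holds. Let Ĵ : ℤ → ℂ satisfy |Ĵ(q)| ≥ c for all q ∉ {1, −1}, for each 2 ≤ n ≤ M let g_n : ℤ^n → ℂ satisfy |g_n| ≤ G̃ everywhere, and let P : ℤ → ℂ satisfy P(−q) = conj(P(q)) for all q ∈ ℤ, |P(q)| ≤ a₀/q² for all q ≠ 0, sup_{q∈ℤ} |P(q)| = |P(1)| =: ε ≤ ε_r, and the harmonic-balance equation Ĵ(q)·P(q) = Σ_{n=2}^{M} S(g_n,n,P)(q) for all q ∉ {1, −1}. Then |P(q)| ≤ c_{|q|}·ε^{|q|} for every q with 2 ≤ |q| ≤ r, and |P(q)| ≤ c_r·ε^{r} for every q with |q| > r. (In particular Worman's law |P(q)| ≲ |P(1)|^{|q|} holds up to any prescribed rank r once the amplitude |P(1)| is small enough.) -/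

import Mathlib

/-- For `q : ℤ` and `k = (k₁, …, k_m) : Fin m → ℤ`, `diffs q k i` is the `i`-th successive
difference in the chain `q, k₁, k₂, …, k_m, 0`; i.e. `diffs q k 0 = q - k₁`,
`diffs q k i = kᵢ - k_{i+1}` for `1 ≤ i ≤ m - 1`, and `diffs q k m = k_m`. -/
def diffs (q : ℤ) {m : ℕ} (k : Fin m → ℤ) (i : ℕ) : ℤ :=
  (q :: (List.ofFn k ++ [0])).getD i 0 - (q :: (List.ofFn k ++ [0])).getD (i + 1) 0

/-- `Sg n g P q = Σ_{k₁,…,k_{n-1} ∈ ℤ} g(q,k₁,…,k_{n-1}) · P(q-k₁)·P(k₁-k₂)⋯P(k_{n-1})`,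
the convolution-type multiple series with kernel `g`. -/
noncomputable def Sg (n : ℕ) (g : (Fin n → ℤ) → ℂ) (P : ℤ → ℂ) (q : ℤ) : ℂ :=
  ∑' k : Fin (n - 1) → ℤ,
    g (fun i : Fin n => (q :: List.ofFn k).getD (i : ℕ) 0) *
      ∏ i ∈ Finset.range n, P (diffs q k i)

open scoped ENNReal

/-!
Write `Φ q = ‖P q‖`, `E = ‖P 1‖ ≤ 1` and `⟨q⟩ = max |q| 1`. The proof bootstraps bounds of the form
`Φ q ≤ A * E ^ min ⟨q⟩ t * ⟨q⟩ ^ (-4/3)`. Interpolating `Φ ≤ E` with `Φ q ≤ a₀ / q²` gives one with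
`t = 1/3`. Because `∑_d ⟨q - d⟩ ^ (-4/3) * ⟨d⟩ ^ (-4/3) ≤ C ⟨q⟩ ^ (-4/3)` and
`min ⟨a + b⟩ u ≤ min ⟨a⟩ t + min ⟨b⟩ t` for `u ≤ min (2t) (t + 1)`, every convolution power of
order at least two of `Φ` obeys the bound with `t + 1/3` in place of `t`; the harmonic-balance
equation and `‖Ĵ‖ ≥ c` carry it back to `Φ` off `q = ±1`, where it is trivial. After `3r` steps
`t ≥ r`. Only `E ≤ 1` is used and the constants depend on `a₀, c, G̃, M, r` alone, so `ε_r = 1/2`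
works.
-/

def bracket (d : ℤ) : ℕ := max d.natAbs 1

lemma one_le_bracket (d : ℤ) : 1 ≤ bracket d := le_max_right _ _

lemma bracket_add_le (a b : ℤ) : bracket (a + b) ≤ bracket a + bracket b := by
  have := Int.natAbs_add_le a b
  unfold bracket; omega

lemma bracket_add_le_two_mul {a b : ℤ} (h : b.natAbs ≤ a.natAbs) :
    bracket (a + b) ≤ 2 * bracket a := by
  have := Int.natAbs_add_le a b
  unfold bracket; omega

-- Any exponent in `(1, 2)` works: above `1` for summability, below `2` so that the seed
-- interpolation leaves a positive power of `E`.
noncomputable def weight (d : ℤ) : ℝ≥0∞ := (bracket d : ℝ≥0∞) ^ (-(4 / 3 : ℝ))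

lemma weight_le_one (d : ℤ) : weight d ≤ 1 :=
  ENNReal.rpow_le_one_of_one_le_of_neg (by exact_mod_cast one_le_bracket d) (by norm_num)

lemma weight_eq_one {d : ℤ} (h : d.natAbs ≤ 1) : weight d = 1 := by
  have : bracket d = 1 := by unfold bracket; omega
  simp [weight, this]

lemma weight_le_four_mul {a b : ℤ} (h : bracket b ≤ 2 * bracket a) : weight a ≤ 4 * weight b := by
  have h2 : (2 : ℝ≥0∞) ^ (4 / 3 : ℝ) ≤ 4 := by
    calc (2 : ℝ≥0∞) ^ (4 / 3 : ℝ) ≤ 2 ^ (2 : ℝ) :=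
          ENNReal.rpow_le_rpow_of_exponent_le (by norm_num) (by norm_num)
      _ = 4 := by norm_num
  calc weight a = 4 * (4 * (bracket a : ℝ≥0∞) ^ (4 / 3 : ℝ))⁻¹ := by
        rw [ENNReal.mul_inv (by simp) (by simp), ← mul_assoc,
          ENNReal.mul_inv_cancel (by simp) (by simp), one_mul, weight, ENNReal.rpow_neg]
    _ ≤ 4 * ((2 * bracket a : ℝ≥0∞) ^ (4 / 3 : ℝ))⁻¹ := by
        rw [ENNReal.mul_rpow_of_nonneg _ _ (by norm_num)]
        gcongr
    _ ≤ 4 * weight b := by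
        rw [weight, ENNReal.rpow_neg]
        gcongr
        exact_mod_cast h

noncomputable def weightSum : ℝ≥0∞ := ∑' d, weight d

lemma weightSum_ne_top : weightSum ≠ ⊤ := by
  have hsum : Summable fun d : ℤ => (bracket d : ℝ) ^ (-(4 / 3 : ℝ)) := by
    refine (Real.summable_abs_int_rpow (b := 4 / 3) (by norm_num)).congr_cofinite ?_
    filter_upwards [(Set.finite_singleton (0 : ℤ)).compl_mem_cofinite] with d hd
    have hd : d ≠ 0 := hd
    have : bracket d = d.natAbs := by unfold bracket; omega
    rw [this, Nat.cast_natAbs, Int.cast_abs]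
  have hw : ∀ d, weight d = ENNReal.ofReal ((bracket d : ℝ) ^ (-(4 / 3 : ℝ))) := fun d => by
    rw [weight, ← ENNReal.ofReal_natCast,
      ENNReal.ofReal_rpow_of_pos (by exact_mod_cast one_le_bracket d)]
  rw [weightSum, tsum_congr hw, ← ENNReal.ofReal_tsum_of_nonneg (fun _ => by positivity) hsum]
  exact ENNReal.ofReal_ne_top

-- Of `q - d` and `d`, the larger one is comparable to `q`.
lemma weight_mul_weight_le (q d : ℤ) :
    weight (q - d) * weight d ≤ 4 * weight q * (weight (q - d) + weight d) := by
  rcases le_total (q - d).natAbs d.natAbs with h | h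
  · have hd : weight d ≤ 4 * weight q :=
      weight_le_four_mul (by simpa using bracket_add_le_two_mul h)
    calc weight (q - d) * weight d ≤ weight (q - d) * (4 * weight q) := by gcongr
      _ ≤ 4 * weight q * (weight (q - d) + weight d) := by
          rw [mul_comm]; gcongr; exact le_self_add
  · have hd : weight (q - d) ≤ 4 * weight q :=
      weight_le_four_mul (by simpa using bracket_add_le_two_mul h)
    calc weight (q - d) * weight d ≤ 4 * weight q * weight d := by gcongr
      _ ≤ 4 * weight q * (weight (q - d) + weight d) := by gcongr; exact le_add_self

lemma tsum_weight_mul_weight_le (q : ℤ) :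
    ∑' d, weight (q - d) * weight d ≤ 8 * weightSum * weight q :=
  calc ∑' d, weight (q - d) * weight d ≤ ∑' d, 4 * weight q * (weight (q - d) + weight d) :=
        ENNReal.tsum_le_tsum (weight_mul_weight_le q)
    _ = 4 * weight q * (weightSum + weightSum) := by
        rw [ENNReal.tsum_mul_left, ENNReal.tsum_add, weightSum,
          ← (Equiv.subLeft q).tsum_eq weight]
        rfl
    _ = 8 * weightSum * weight q := by ring

noncomputable def decayExp (t : ℝ) (d : ℤ) : ℝ := min (bracket d : ℝ) t

lemma decayExp_nonneg {t : ℝ} (ht : 0 ≤ t) (d : ℤ) : 0 ≤ decayExp t d :=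
  le_min (Nat.cast_nonneg _) ht

lemma decayExp_mono {s t : ℝ} (h : s ≤ t) (d : ℤ) : decayExp s d ≤ decayExp t d :=
  min_le_min le_rfl h

lemma decayExp_le_one {d : ℤ} (hd : d.natAbs ≤ 1) (t : ℝ) : decayExp t d ≤ 1 := by
  have : bracket d = 1 := by unfold bracket; omega
  simp [decayExp, this]

lemma decayExp_add_le {t u : ℝ} (hu2 : u ≤ 2 * t) (hu1 : u ≤ t + 1) (a b : ℤ) :
    decayExp u (a + b) ≤ decayExp t a + decayExp t b := by
  have hab : (bracket (a + b) : ℝ) ≤ bracket a + bracket b := by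
    exact_mod_cast bracket_add_le a b
  have ha : (1 : ℝ) ≤ bracket a := by exact_mod_cast one_le_bracket a
  have hb : (1 : ℝ) ≤ bracket b := by exact_mod_cast one_le_bracket b
  unfold decayExp
  rcases min_cases (bracket a : ℝ) t with ⟨h1, h1'⟩ | ⟨h1, h1'⟩ <;>
    rcases min_cases (bracket b : ℝ) t with ⟨h2, h2'⟩ | ⟨h2, h2'⟩ <;>
    rw [h1, h2] <;>
    linarith [min_le_left (bracket (a + b) : ℝ) u, min_le_right (bracket (a + b) : ℝ) u]

lemma diffs_cons_zero {m : ℕ} (q d : ℤ) (k : Fin m → ℤ) : diffs q (Fin.cons d k) 0 = q - d := by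
  simp [diffs, List.ofFn_succ]

lemma diffs_cons_succ {m : ℕ} (q d : ℤ) (k : Fin m → ℤ) (i : ℕ) :
    diffs q (Fin.cons d k) (i + 1) = diffs d k i := by
  simp [diffs, List.ofFn_succ]

noncomputable def convPow (Φ : ℤ → ℝ≥0∞) (m : ℕ) (q : ℤ) : ℝ≥0∞ :=
  ∑' k : Fin m → ℤ, ∏ i ∈ Finset.range (m + 1), Φ (diffs q k i)

lemma convPow_zero (Φ : ℤ → ℝ≥0∞) : convPow Φ 0 = Φ := by
  ext q
  rw [convPow, tsum_eq_single 0 fun k hk => absurd (Subsingleton.elim k 0) hk]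
  simp [diffs]

lemma convPow_succ (Φ : ℤ → ℝ≥0∞) (m : ℕ) (q : ℤ) :
    convPow Φ (m + 1) q = ∑' d, Φ (q - d) * convPow Φ m d := by
  rw [convPow, ← (Fin.consEquiv fun _ => ℤ).tsum_eq, ENNReal.tsum_prod']
  refine tsum_congr fun d => ?_
  rw [convPow, ← ENNReal.tsum_mul_left]
  refine tsum_congr fun k => ?_
  rw [show (Fin.consEquiv fun _ => ℤ) (d, k) = Fin.cons d k from rfl, Finset.prod_range_succ',
    diffs_cons_zero, mul_comm]
  simp only [diffs_cons_succ]

lemma enorm_Sg_le {n : ℕ} (hn : 1 ≤ n) {g : (Fin n → ℤ) → ℂ} {G : ℝ≥0∞}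
    (hg : ∀ v, ‖g v‖ₑ ≤ G) (P : ℤ → ℂ) (q : ℤ) :
    ‖Sg n g P q‖ₑ ≤ G * convPow (fun d => ‖P d‖ₑ) (n - 1) q := by
  obtain ⟨m, rfl⟩ : ∃ m, n = m + 1 := ⟨n - 1, by omega⟩
  rw [Sg, convPow, Nat.add_sub_cancel, ← ENNReal.tsum_mul_left]
  refine enorm_tsum_le_tsum_enorm.trans (ENNReal.tsum_le_tsum fun k => ?_)
  rw [enorm_mul]
  gcongr
  · exact hg _
  · simp [enorm_eq_nnnorm, nnnorm_prod]

lemma ofReal_mul_enorm_le_of_balance {c Gb : ℝ} {M : ℕ} {J : ℤ → ℂ}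
    {g : (n : ℕ) → (Fin n → ℤ) → ℂ} {P : ℤ → ℂ}
    (hJ : ∀ q : ℤ, q ≠ 1 → q ≠ -1 → c ≤ ‖J q‖)
    (hg : ∀ n : ℕ, 2 ≤ n → n ≤ M → ∀ v : Fin n → ℤ, ‖g n v‖ ≤ Gb)
    (hbal : ∀ q : ℤ, q ≠ 1 → q ≠ -1 → J q * P q = ∑ n ∈ Finset.Icc 2 M, Sg n (g n) P q)
    {q : ℤ} (hq1 : q ≠ 1) (hq2 : q ≠ -1) :
    ENNReal.ofReal c * ‖P q‖ₑ ≤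
      ENNReal.ofReal Gb * ∑ n ∈ Finset.Icc 2 M, convPow (fun d => ‖P d‖ₑ) (n - 1) q :=
  calc ENNReal.ofReal c * ‖P q‖ₑ ≤ ‖J q‖ₑ * ‖P q‖ₑ := by
        rw [← ofReal_norm (J q)]; gcongr; exact hJ q hq1 hq2
    _ = ‖∑ n ∈ Finset.Icc 2 M, Sg n (g n) P q‖ₑ := by rw [← enorm_mul, hbal q hq1 hq2]
    _ ≤ ∑ n ∈ Finset.Icc 2 M, ‖Sg n (g n) P q‖ₑ := enorm_sum_le _ _
    _ ≤ ∑ n ∈ Finset.Icc 2 M, ENNReal.ofReal Gb * convPow (fun d => ‖P d‖ₑ) (n - 1) q := by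
        gcongr with n hn
        obtain ⟨hn2, hnM⟩ := Finset.mem_Icc.1 hn
        refine enorm_Sg_le (by omega) (fun v => ?_) P q
        rw [← ofReal_norm]
        exact ENNReal.ofReal_le_ofReal (hg n hn2 hnM v)
    _ = _ := (Finset.mul_sum _ _ _).symm

-- The `max 1` covers `q = ±1`, where the balance equation says nothing.
noncomputable def bootConst (c G : ℝ≥0∞) (M : ℕ) (A : ℝ≥0∞) : ℝ≥0∞ :=
  max 1 (c⁻¹ * G * ∑ n ∈ Finset.Icc 2 M, (8 * weightSum * A) ^ (n - 1) * A)

lemma bootConst_ne_top {c G A : ℝ≥0∞} (M : ℕ) (hc : c ≠ 0) (hG : G ≠ ⊤) (hA : A ≠ ⊤) :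
    bootConst c G M A ≠ ⊤ := by
  simp [bootConst, ENNReal.mul_eq_top, hc, hG, hA, weightSum_ne_top]

def DecayBound (E : ℝ≥0∞) (t : ℝ) (A : ℝ≥0∞) (Φ : ℤ → ℝ≥0∞) : Prop :=
  ∀ d, Φ d ≤ A * E ^ decayExp t d * weight d

namespace DecayBound

variable {E A B : ℝ≥0∞} {t u : ℝ} {Φ Ψ : ℤ → ℝ≥0∞}

lemma mono_exp (hE : E ≤ 1) (hut : u ≤ t) (h : DecayBound E t A Φ) : DecayBound E u A Φ :=
  fun d => (h d).trans <| by
    gcongr ?_ * _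
    exact mul_le_mul_right (ENNReal.rpow_le_rpow_of_exponent_ge hE (decayExp_mono hut d)) _

lemma conv (hE : E ≤ 1) (ht : 0 ≤ t) (hu2 : u ≤ 2 * t) (hu1 : u ≤ t + 1)
    (hΦ : DecayBound E t A Φ) (hΨ : DecayBound E t B Ψ) :
    DecayBound E u (8 * weightSum * A * B) (fun q => ∑' d, Φ (q - d) * Ψ d) := by
  intro q
  have hterm : ∀ d, Φ (q - d) * Ψ d ≤
      A * B * E ^ decayExp u q * (weight (q - d) * weight d) := by
    intro d
    have hexp : E ^ decayExp t (q - d) * E ^ decayExp t d ≤ E ^ decayExp u q := by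
      rw [← ENNReal.rpow_add_of_nonneg _ _ (decayExp_nonneg ht _) (decayExp_nonneg ht _)]
      exact ENNReal.rpow_le_rpow_of_exponent_ge hE
        (by simpa using decayExp_add_le hu2 hu1 (q - d) d)
    calc Φ (q - d) * Ψ d
        ≤ (A * E ^ decayExp t (q - d) * weight (q - d)) * (B * E ^ decayExp t d * weight d) :=
          mul_le_mul' (hΦ _) (hΨ _)
      _ = A * B * (E ^ decayExp t (q - d) * E ^ decayExp t d) * (weight (q - d) * weight d) := by
          ring
      _ ≤ A * B * E ^ decayExp u q * (weight (q - d) * weight d) := by gcongr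
  calc ∑' d, Φ (q - d) * Ψ d
      ≤ ∑' d, A * B * E ^ decayExp u q * (weight (q - d) * weight d) := ENNReal.tsum_le_tsum hterm
    _ = A * B * E ^ decayExp u q * ∑' d, weight (q - d) * weight d := ENNReal.tsum_mul_left
    _ ≤ A * B * E ^ decayExp u q * (8 * weightSum * weight q) := by
        gcongr; exact tsum_weight_mul_weight_le q
    _ = 8 * weightSum * A * B * E ^ decayExp u q * weight q := by ring

lemma convPow (hE : E ≤ 1) (ht : 0 ≤ t) (h : DecayBound E t A Φ) (m : ℕ) :
    DecayBound E t ((8 * weightSum * A) ^ m * A) (_root_.convPow Φ m) := by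
  induction m with
  | zero => simpa [convPow_zero] using h
  | succ m ih =>
    have := h.conv hE ht (by linarith) (by linarith) ih
    rw [show 8 * weightSum * A * ((8 * weightSum * A) ^ m * A) =
      (8 * weightSum * A) ^ (m + 1) * A by ring] at this
    exact fun q => (convPow_succ Φ m q).le.trans (this q)

lemma convPow_succ (hE : E ≤ 1) (ht : 0 ≤ t) (hu2 : u ≤ 2 * t) (hu1 : u ≤ t + 1)
    (h : DecayBound E t A Φ) (m : ℕ) :
    DecayBound E u ((8 * weightSum * A) ^ (m + 1) * A) (_root_.convPow Φ (m + 1)) := by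
  have := h.conv hE ht hu2 hu1 (h.convPow hE ht m)
  rw [show 8 * weightSum * A * ((8 * weightSum * A) ^ m * A) =
    (8 * weightSum * A) ^ (m + 1) * A by ring] at this
  exact fun q => (_root_.convPow_succ Φ m q).le.trans (this q)

lemma bootstrap {c G : ℝ≥0∞} {M : ℕ} (hc0 : c ≠ 0) (hc : c ≠ ⊤) (hE : E ≤ 1)
    (hΦE : ∀ d, Φ d ≤ E)
    (hbal : ∀ q : ℤ, q ≠ 1 → q ≠ -1 →
      c * Φ q ≤ G * ∑ n ∈ Finset.Icc 2 M, _root_.convPow Φ (n - 1) q)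
    (ht : 0 ≤ t) (hu2 : u ≤ 2 * t) (hu1 : u ≤ t + 1) (h : DecayBound E t A Φ) :
    DecayBound E u (bootConst c G M A) Φ := by
  intro q
  by_cases hq : q = 1 ∨ q = -1
  · have hq' : q.natAbs ≤ 1 := by rcases hq with rfl | rfl <;> rfl
    calc Φ q ≤ E ^ (1 : ℝ) := by rw [ENNReal.rpow_one]; exact hΦE q
      _ ≤ E ^ decayExp u q := ENNReal.rpow_le_rpow_of_exponent_ge hE (decayExp_le_one hq' u)
      _ ≤ bootConst c G M A * E ^ decayExp u q * weight q := by
          rw [weight_eq_one hq', mul_one]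
          exact le_mul_of_one_le_left' (le_max_left _ _)
  rw [not_or] at hq
  set S := ∑ n ∈ Finset.Icc 2 M, (8 * weightSum * A) ^ (n - 1) * A
  have hsum : ∑ n ∈ Finset.Icc 2 M, _root_.convPow Φ (n - 1) q ≤
      S * (E ^ decayExp u q * weight q) := by
    rw [Finset.sum_mul]
    gcongr with n hn
    obtain ⟨m, hm⟩ : ∃ m, n - 1 = m + 1 := ⟨n - 2, by have := (Finset.mem_Icc.1 hn).1; omega⟩
    rw [hm, ← mul_assoc]
    exact h.convPow_succ hE ht hu2 hu1 m q
  calc Φ q ≤ c⁻¹ * (G * ∑ n ∈ Finset.Icc 2 M, _root_.convPow Φ (n - 1) q) :=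
        (ENNReal.mul_le_iff_le_inv hc0 hc).1 (hbal q hq.1 hq.2)
    _ ≤ c⁻¹ * (G * (S * (E ^ decayExp u q * weight q))) := by gcongr
    _ = c⁻¹ * G * S * E ^ decayExp u q * weight q := by ring
    _ ≤ bootConst c G M A * E ^ decayExp u q * weight q := by
        gcongr
        exact le_max_right _ _

end DecayBound

lemma decayBound_seed {E a : ℝ≥0∞} {Φ : ℤ → ℝ≥0∞} (hΦE : ∀ d, Φ d ≤ E)
    (hΦa : ∀ d, Φ d ≤ a / (bracket d : ℝ≥0∞) ^ 2) :
    DecayBound E (1 / 3) (a ^ (2 / 3 : ℝ)) Φ := by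
  intro d
  have hexp : decayExp (1 / 3) d = 1 / 3 :=
    min_eq_right ((by norm_num : (1 / 3 : ℝ) ≤ 1).trans (by exact_mod_cast one_le_bracket d))
  rw [hexp]
  calc Φ d = Φ d ^ (1 / 3 : ℝ) * Φ d ^ (2 / 3 : ℝ) := by
        rw [← ENNReal.rpow_add_of_nonneg _ _ (by norm_num) (by norm_num)]; norm_num
    _ ≤ E ^ (1 / 3 : ℝ) * (a / (bracket d : ℝ≥0∞) ^ 2) ^ (2 / 3 : ℝ) := by
        gcongr
        exacts [hΦE d, hΦa d]
    _ = a ^ (2 / 3 : ℝ) * E ^ (1 / 3 : ℝ) * weight d := by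
        rw [ENNReal.div_rpow_of_nonneg _ _ (by norm_num), ← ENNReal.rpow_natCast_mul,
          div_eq_mul_inv (a ^ (2 / 3 : ℝ)), ← ENNReal.rpow_neg, weight]
        norm_num
        ring

noncomputable def decayConst (a c G : ℝ≥0∞) (M k : ℕ) : ℝ≥0∞ :=
  (bootConst c G M)^[k] (a ^ (2 / 3 : ℝ))

lemma decayConst_ne_top {a c G : ℝ≥0∞} (M k : ℕ) (ha : a ≠ ⊤) (hc : c ≠ 0) (hG : G ≠ ⊤) :
    decayConst a c G M k ≠ ⊤ := by
  induction k with
  | zero => exact ENNReal.rpow_ne_top_of_nonneg (by norm_num) ha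
  | succ k ih =>
    rw [decayConst, Function.iterate_succ_apply']
    exact bootConst_ne_top M hc hG ih

lemma decayBound_decayConst {E a c G : ℝ≥0∞} {M : ℕ} {Φ : ℤ → ℝ≥0∞} (hc0 : c ≠ 0)
    (hc : c ≠ ⊤) (hE : E ≤ 1) (hΦE : ∀ d, Φ d ≤ E)
    (hΦa : ∀ d, Φ d ≤ a / (bracket d : ℝ≥0∞) ^ 2)
    (hbal : ∀ q : ℤ, q ≠ 1 → q ≠ -1 →
      c * Φ q ≤ G * ∑ n ∈ Finset.Icc 2 M, convPow Φ (n - 1) q) (k : ℕ) :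
    DecayBound E ((k + 1) / 3) (decayConst a c G M k) Φ := by
  induction k with
  | zero => simpa [decayConst] using decayBound_seed hΦE hΦa
  | succ k ih =>
    rw [decayConst, Function.iterate_succ_apply']
    exact ih.bootstrap hc0 hc hE hΦE hbal (by positivity)
      (by push_cast; linarith [k.cast_nonneg (α := ℝ)]) (by push_cast; linarith)

lemma enorm_le_div_bracket_sq {F : Type*} [SeminormedAddGroup F] {x : F} {a : ℝ} {d : ℤ}
    (hd : d ≠ 0) (h : ‖x‖ ≤ a / (d : ℝ) ^ 2) :
    ‖x‖ₑ ≤ ENNReal.ofReal a / (bracket d : ℝ≥0∞) ^ 2 := by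
  have hbr : ((bracket d : ℕ) : ℝ) ^ 2 = (d : ℝ) ^ 2 := by
    have : bracket d = d.natAbs := by unfold bracket; omega
    rw [this, Nat.cast_natAbs, Int.cast_abs, sq_abs]
  calc ‖x‖ₑ = ENNReal.ofReal ‖x‖ := (ofReal_norm x).symm
    _ ≤ ENNReal.ofReal (a / (d : ℝ) ^ 2) := ENNReal.ofReal_le_ofReal h
    _ = ENNReal.ofReal a / (bracket d : ℝ≥0∞) ^ 2 := by
        rw [ENNReal.ofReal_div_of_pos (by positivity), ← hbr, ENNReal.ofReal_pow (by positivity),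
          ENNReal.ofReal_natCast]

lemma norm_le_of_iSup_eq {P : ℤ → ℂ} {a₀ : ℝ}
    (hdecay : ∀ q : ℤ, q ≠ 0 → ‖P q‖ ≤ a₀ / (q : ℝ) ^ 2)
    (hsup : (⨆ q : ℤ, ‖P q‖) = ‖P 1‖) (q : ℤ) : ‖P q‖ ≤ ‖P 1‖ := by
  have hbdd : BddAbove (Set.range fun q : ℤ => ‖P q‖) := by
    refine ⟨max |a₀| ‖P 0‖, ?_⟩
    rintro x ⟨q, rfl⟩
    rcases eq_or_ne q 0 with rfl | hq
    · exact le_max_right _ _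
    · have hq2 : (1 : ℝ) ≤ (q : ℝ) ^ 2 := by
        rw [← sq_abs, one_le_sq_iff_one_le_abs, abs_abs, ← Int.cast_abs]
        exact_mod_cast Int.one_le_abs hq
      calc ‖P q‖ ≤ a₀ / (q : ℝ) ^ 2 := hdecay q hq
        _ ≤ |a₀| / (q : ℝ) ^ 2 := by gcongr; exact le_abs_self a₀
        _ ≤ |a₀| := div_le_self (abs_nonneg a₀) hq2
        _ ≤ max |a₀| ‖P 0‖ := le_max_left _ _
  exact hsup ▸ le_ciSup hbdd q

lemma norm_le_decayConst_mul_pow {a₀ c Gb : ℝ} (hc : 0 < c) {M : ℕ} {J : ℤ → ℂ}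
    {g : (n : ℕ) → (Fin n → ℤ) → ℂ} {P : ℤ → ℂ}
    (hJ : ∀ q : ℤ, q ≠ 1 → q ≠ -1 → c ≤ ‖J q‖)
    (hg : ∀ n : ℕ, 2 ≤ n → n ≤ M → ∀ v : Fin n → ℤ, ‖g n v‖ ≤ Gb)
    (hdecay : ∀ q : ℤ, q ≠ 0 → ‖P q‖ ≤ a₀ / (q : ℝ) ^ 2)
    (hsup : (⨆ q : ℤ, ‖P q‖) = ‖P 1‖) (hsmall : ‖P 1‖ ≤ 1)
    (hbal : ∀ q : ℤ, q ≠ 1 → q ≠ -1 → J q * P q = ∑ n ∈ Finset.Icc 2 M, Sg n (g n) P q)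
    (r : ℕ) (q : ℤ) :
    ‖P q‖ ≤ (decayConst (max (ENNReal.ofReal a₀) 1) (ENNReal.ofReal c) (ENNReal.ofReal Gb) M
      (3 * r)).toReal * ‖P 1‖ ^ min (bracket q) r := by
  have hE : ‖P 1‖ₑ ≤ 1 := by
    rw [← ofReal_norm, ← ENNReal.ofReal_one]; exact ENNReal.ofReal_le_ofReal hsmall
  have hΦE : ∀ d, ‖P d‖ₑ ≤ ‖P 1‖ₑ := fun d => by
    rw [← ofReal_norm, ← ofReal_norm]
    exact ENNReal.ofReal_le_ofReal (norm_le_of_iSup_eq hdecay hsup d)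
  have hΦa : ∀ d, ‖P d‖ₑ ≤ max (ENNReal.ofReal a₀) 1 / (bracket d : ℝ≥0∞) ^ 2 := by
    intro d
    rcases eq_or_ne d 0 with rfl | hd
    · simpa [bracket] using (hΦE 0).trans (hE.trans (le_max_right _ _))
    · exact (enorm_le_div_bracket_sq hd (hdecay d hd)).trans (by gcongr; exact le_max_left _ _)
  have hc0 : ENNReal.ofReal c ≠ 0 := by simpa using hc
  have hbound := (decayBound_decayConst hc0 ENNReal.ofReal_ne_top hE hΦE hΦa
    (fun q hq1 hq2 => ofReal_mul_enorm_le_of_balance hJ hg hbal hq1 hq2) (3 * r)).mono_exp hE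
    (u := r) (by push_cast; linarith) q
  have hexp : decayExp r q = (min (bracket q) r : ℕ) := by simp [decayExp]
  rw [hexp, ENNReal.rpow_natCast] at hbound
  have hD := decayConst_ne_top M (3 * r)
    (max_lt (ENNReal.ofReal_lt_top (r := a₀)) ENNReal.one_lt_top).ne hc0
    (ENNReal.ofReal_ne_top (r := Gb))
  have := ENNReal.toReal_mono (ENNReal.mul_ne_top hD (ENNReal.pow_ne_top enorm_ne_top))
    (hbound.trans (mul_le_of_le_one_right' (weight_le_one q)))
  simpa [ENNReal.toReal_mul, ENNReal.toReal_pow, toReal_enorm] using this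

theorem stmt13_general (a₀ c Gb : ℝ) (hc : 0 < c)
    (M : ℕ) (r : ℕ) :
    ∃ εᵣ ∈ Set.Ioo (0 : ℝ) 1, ∃ C : ℕ → ℝ,
      (∀ i : ℕ, 2 ≤ i → i ≤ r → 0 < C i) ∧
      ∀ J : ℤ → ℂ, (∀ q : ℤ, q ≠ 1 → q ≠ -1 → c ≤ ‖J q‖) →
      ∀ g : (n : ℕ) → (Fin n → ℤ) → ℂ,
        (∀ n : ℕ, 2 ≤ n → n ≤ M → ∀ v : Fin n → ℤ, ‖g n v‖ ≤ Gb) →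
      ∀ P : ℤ → ℂ,
        (∀ q : ℤ, P (-q) = starRingEnd ℂ (P q)) →
        (∀ q : ℤ, q ≠ 0 → ‖P q‖ ≤ a₀ / (q : ℝ) ^ 2) →
        (⨆ q : ℤ, ‖P q‖) = ‖P 1‖ →
        ‖P 1‖ ≤ εᵣ →
        (∀ q : ℤ, q ≠ 1 → q ≠ -1 → J q * P q = ∑ n ∈ Finset.Icc 2 M, Sg n (g n) P q) →
        (∀ q : ℤ, 2 ≤ |q| → |q| ≤ (r : ℤ) → ‖P q‖ ≤ C q.natAbs * ‖P 1‖ ^ q.natAbs) ∧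
        (∀ q : ℤ, (r : ℤ) < |q| → ‖P q‖ ≤ C r * ‖P 1‖ ^ r) := by
  set D := (decayConst (max (ENNReal.ofReal a₀) 1) (ENNReal.ofReal c) (ENNReal.ofReal Gb) M
    (3 * r)).toReal
  refine ⟨1 / 2, ⟨by norm_num, by norm_num⟩, fun _ => max D 1, fun _ _ _ => by positivity, ?_⟩
  intro J hJ g hg P _ hdecay hsup hsmall hbal
  have hP := norm_le_decayConst_mul_pow hc hJ hg hdecay hsup (hsmall.trans (by norm_num)) hbal r
  have hD : ∀ n : ℕ, D * ‖P 1‖ ^ n ≤ max D 1 * ‖P 1‖ ^ n := fun n => by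
    gcongr; exact le_max_left _ _
  refine ⟨fun q hq2 hqr => ?_, fun q hqr => ?_⟩
  · rw [← Int.natCast_natAbs] at hq2 hqr
    have hmin : min (bracket q) r = q.natAbs := by unfold bracket; omega
    simpa only [hmin] using (hP q).trans (hD _)
  · rw [← Int.natCast_natAbs] at hqr
    have hmin : min (bracket q) r = r := by unfold bracket; omega
    simpa only [hmin] using (hP q).trans (hD _)

theorem stmt13 (a₀ c Gb : ℝ) (ha₀ : 0 < a₀) (hc : 0 < c) (hGb : 0 < Gb)
    (M : ℕ) (hM : 2 ≤ M) (r : ℕ) (hr : 2 ≤ r) :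
    ∃ εᵣ ∈ Set.Ioo (0 : ℝ) 1, ∃ C : ℕ → ℝ,
      (∀ i : ℕ, 2 ≤ i → i ≤ r → 0 < C i) ∧
      ∀ J : ℤ → ℂ, (∀ q : ℤ, q ≠ 1 → q ≠ -1 → c ≤ ‖J q‖) →
      ∀ g : (n : ℕ) → (Fin n → ℤ) → ℂ,
        (∀ n : ℕ, 2 ≤ n → n ≤ M → ∀ v : Fin n → ℤ, ‖g n v‖ ≤ Gb) →
      ∀ P : ℤ → ℂ,
        (∀ q : ℤ, P (-q) = starRingEnd ℂ (P q)) →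
        (∀ q : ℤ, q ≠ 0 → ‖P q‖ ≤ a₀ / (q : ℝ) ^ 2) →
        (⨆ q : ℤ, ‖P q‖) = ‖P 1‖ →
        ‖P 1‖ ≤ εᵣ →
        (∀ q : ℤ, q ≠ 1 → q ≠ -1 → J q * P q = ∑ n ∈ Finset.Icc 2 M, Sg n (g n) P q) →
        (∀ q : ℤ, 2 ≤ |q| → |q| ≤ (r : ℤ) → ‖P q‖ ≤ C q.natAbs * ‖P 1‖ ^ q.natAbs) ∧
        (∀ q : ℤ, (r : ℤ) < |q| → ‖P q‖ ≤ C r * ‖P 1‖ ^ r) :=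
  stmt13_general a₀ c Gb hc M r
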